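/- arXiv:2307.07780 — 5 statements merged into one kernel-verified Lean document; each statement's English description precedes it below -/
import Mathlib

section
/- Let H be a Hilbert space with a closed convex cone H⁺ (the nonnegative elements), T : H → H a bounded invertible operator whose inverse maps H⁺ to H⁺, and K : H → H a bounded positive operator (mapping H⁺ to H⁺) with ‖T⁻¹K‖ < 1. Then (T − K)⁻¹ maps H⁺ into H⁺. -/
/-- If `T` is boundedly invertible with positivity-preserving inverse `Tinv`
(with respect to a closed convex cone `P`), `K` is a positive bounded operator,
and `‖Tinv ∘ K‖ < 1`, then `(T - K)⁻¹` maps the cone `P` into itself. -/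
theorem inverse_positive_of_neumann
    {H : Type*} [NormedAddCommGroup H] [InnerProductSpace ℝ H] [CompleteSpace H]
    (P : Set H) (hPclosed : IsClosed P) (hPconv : Convex ℝ P)
    (hPcone : ∀ (c : ℝ) (u : H), 0 ≤ c → u ∈ P → c • u ∈ P)
    (T K Tinv : H →L[ℝ] H)
    (hTl : Tinv.comp T = ContinuousLinearMap.id ℝ H)
    (hTr : T.comp Tinv = ContinuousLinearMap.id ℝ H)
    (hTinvPos : ∀ u ∈ P, Tinv u ∈ P)
    (hKPos : ∀ u ∈ P, K u ∈ P)
    (hcontr : ‖Tinv.comp K‖ < 1) :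
    ∀ u : H, (T - K) u ∈ P → u ∈ P := by
  intro u hq
  set q := (T - K) u with hqdef
  -- P is closed under addition
  have hadd : ∀ a ∈ P, ∀ b ∈ P, a + b ∈ P := by
    intro a ha b hb
    have h := hPconv ha hb (by norm_num : (0:ℝ) ≤ 1/2) (by norm_num : (0:ℝ) ≤ 1/2)
      (by norm_num)
    have h2 := hPcone 2 _ (by norm_num) h
    have : (2:ℝ) • ((1/2 : ℝ) • a + (1/2 : ℝ) • b) = a + b := by
      rw [smul_add, smul_smul, smul_smul]; norm_num
    rwa [this] at h2
  -- the contraction map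
  set f : H → H := fun v => Tinv (K v) + Tinv q with hf
  have hlip : LipschitzWith ‖Tinv.comp K‖₊ f := by
    refine LipschitzWith.of_dist_le_mul fun x y => ?_
    have : f x - f y = (Tinv.comp K) (x - y) := by
      simp [hf, map_sub]
    rw [dist_eq_norm, dist_eq_norm, this]
    exact (Tinv.comp K).le_opNorm _
  have hc : ‖Tinv.comp K‖₊ < 1 := by
    rwa [← NNReal.coe_lt_coe, coe_nnnorm, NNReal.coe_one]
  have hcontr' : ContractingWith ‖Tinv.comp K‖₊ f := ⟨hc, hlip⟩
  -- u is a fixed point of f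
  have hfix : Function.IsFixedPt f u := by
    show Tinv (K u) + Tinv q = u
    have : Tinv (K u) + Tinv q = Tinv (T u) := by
      simp [hqdef, map_sub]
    rw [this]
    have := congrArg (fun L : H →L[ℝ] H => L u) hTl
    simpa using this
  -- f maps P into P
  have hfP : ∀ v ∈ P, f v ∈ P := fun v hv =>
    hadd _ (hTinvPos _ (hKPos _ hv)) _ (hTinvPos _ hq)
  -- iterates from Tinv q stay in P
  have hx0 : Tinv q ∈ P := hTinvPos _ hq
  have hiter : ∀ n, f^[n] (Tinv q) ∈ P := by
    intro n
    induction n with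
    | zero => simpa using hx0
    | succ n ih => rw [Function.iterate_succ_apply']; exact hfP _ ih
  have htend := hcontr'.tendsto_iterate_fixedPoint (Tinv q)
  have hlim : hcontr'.fixedPoint f ∈ P :=
    hPclosed.mem_of_tendsto htend (Filter.Eventually.of_forall hiter)
  rwa [← hcontr'.fixedPoint_unique hfix] at hlim
end

section
/- Let H be a Hilbert space, C : H → H a bounded operator, λ° ∈ ℂ, and suppose the inf-sup constant of M_{λ°} = I − λ°C over a closed subspace Z satisfies inf_{w∈Z} sup_{v∈Z} ⟨M_{λ°}w, v⟩/(‖w‖‖v‖) ≥ θ > 0 (and the transposed inf-sup condition also holds with the same bound). Then for every ν with |ν − λ°| ≤ θ/(2‖C‖), the operator M_ν = I − νC satisfies inf_{w∈Z} sup_{v∈Z} ⟨M_ν w, v⟩/(‖w‖‖v‖) ≥ θ/2, and P_Z M_ν|_Z is boundedly invertible on Z. -/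
/-!
Write `T_μ = P_Z M_μ|_Z`. The sup over `v ∈ Z` of `|⟨M_μ w, v⟩| / ‖v‖` is `‖T_μ w‖`, and the
sup over `w ∈ Z` of `|⟨M_μ w, v⟩| / ‖w‖` is `‖T_μ† v‖`, so the two inf-sup conditions say that
`T_{λ₀}` and its adjoint are bounded below by `θ`. Since `‖T_ν - T_{λ₀}‖ ≤ |ν - λ₀| ‖C‖ ≤ θ/2`,
both `T_ν` and `T_ν†` are bounded below by `θ/2`; an operator bounded below has closed range,
and one whose adjoint is injective has dense range, so `T_ν` is invertible.
-/

section

open ContinuousLinearMap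
open scoped InnerProduct

variable {𝕜 E F : Type*} [RCLike 𝕜]

lemma ContinuousLinearMap.le_norm_map_of_norm_sub_le [SeminormedAddCommGroup E]
    [NormedSpace 𝕜 E] [SeminormedAddCommGroup F] [NormedSpace 𝕜 F] {A B : E →L[𝕜] F} {c δ : ℝ} (hA : ∀ x, c * ‖x‖ ≤ ‖A x‖)
    (hAB : ‖B - A‖ ≤ δ) (x : E) : (c - δ) * ‖x‖ ≤ ‖B x‖ := by
  have hdiff : ‖A x‖ - ‖B x‖ ≤ δ * ‖x‖ :=
    calc ‖A x‖ - ‖B x‖ ≤ ‖(B - A) x‖ := by rw [sub_apply, norm_sub_rev]; exact norm_sub_norm_le _ _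
      _ ≤ ‖B - A‖ * ‖x‖ := le_opNorm _ _
      _ ≤ δ * ‖x‖ := by gcongr
  linarith [hA x]

section InnerProductSpace

variable [NormedAddCommGroup E] [InnerProductSpace 𝕜 E]

lemma iSup_norm_inner_div_norm (y : E) : ⨆ x : E, ‖(inner 𝕜 y x : 𝕜)‖ / ‖x‖ = ‖y‖ := by
  have hle : ∀ x : E, ‖(inner 𝕜 y x : 𝕜)‖ / ‖x‖ ≤ ‖y‖ := fun x =>
    div_le_of_le_mul₀ (norm_nonneg _) (norm_nonneg _) (norm_inner_le_norm y x)
  refine le_antisymm (ciSup_le hle) (le_ciSup_of_le ⟨‖y‖, Set.forall_mem_range.mpr hle⟩ y ?_)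
  rw [inner_self_eq_norm_sq_to_K, norm_pow, RCLike.norm_ofReal, abs_norm, sq, mul_self_div_self]

lemma Submodule.iSup_norm_inner_div_norm_eq_norm_orthogonalProjectionOnto (K : Submodule 𝕜 E)
    [K.HasOrthogonalProjection] (x : E) :
    ⨆ v : K, ‖(inner 𝕜 x (v : E) : 𝕜)‖ / ‖(v : E)‖ = ‖K.orthogonalProjectionOnto x‖ := by
  simp_rw [← K.inner_orthogonalProjectionOnto_eq_of_mem_right]
  exact iSup_norm_inner_div_norm _

namespace Submodule

variable (K : Submodule 𝕜 E) [K.HasOrthogonalProjection]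

noncomputable def compression (A : E →L[𝕜] E) : K →L[𝕜] K :=
  K.orthogonalProjectionOnto.comp (A.comp K.subtypeL)

@[simp]
lemma compression_apply (A : E →L[𝕜] E) (x : K) :
    K.compression A x = K.orthogonalProjectionOnto (A x) := rfl

lemma compression_sub (A B : E →L[𝕜] E) :
    K.compression (A - B) = K.compression A - K.compression B := by
  ext x
  simp

lemma norm_compression_le (A : E →L[𝕜] E) : ‖K.compression A‖ ≤ ‖A‖ :=
  opNorm_le_bound _ (norm_nonneg A) fun x =>
    (K.norm_orthogonalProjectionOnto_apply_le (A x)).trans (A.le_opNorm x)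

lemma iSup_norm_inner_div_norm_eq_norm_adjoint_compression [CompleteSpace K]
    (A : E →L[𝕜] E) (v : K) :
    ⨆ w : K, ‖(inner 𝕜 (A w) (v : E) : 𝕜)‖ / ‖(w : E)‖ = ‖((K.compression A)†) v‖ := by
  have hinner : ∀ w : K,
      ‖(inner 𝕜 (A w) (v : E) : 𝕜)‖ = ‖(inner 𝕜 (((K.compression A)†) v) w : 𝕜)‖ := by
    intro w
    rw [adjoint_inner_left, norm_inner_symm, compression_apply,
      K.inner_orthogonalProjectionOnto_eq_of_mem_left]
  simp_rw [hinner]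
  exact iSup_norm_inner_div_norm _

end Submodule

lemma ContinuousLinearMap.isUnit_of_le_norm_map_of_le_norm_adjoint_map [CompleteSpace E]
    (T : E →L[𝕜] E) {c : ℝ} (hc : 0 < c) (hT : ∀ x, c * ‖x‖ ≤ ‖T x‖)
    (hT' : ∀ x, c * ‖x‖ ≤ ‖(T†) x‖) : IsUnit T := by
  have hanti : ∀ S : E →L[𝕜] E, (∀ x, c * ‖x‖ ≤ ‖S x‖) → AntilipschitzWith c⁻¹.toNNReal S :=
    fun S hS => S.antilipschitz_of_bound fun x => by
      rw [Real.coe_toNNReal _ (inv_nonneg.mpr hc.le), inv_mul_eq_div, le_div_iff₀ hc, mul_comm]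
      exact hS x
  rw [isUnit_iff_bijective, bijective_iff_dense_range_and_antilipschitz,
    Submodule.topologicalClosure_eq_top_iff, orthogonal_range]
  exact ⟨LinearMap.ker_eq_bot_of_injective (hanti _ hT').injective, _, hanti _ hT⟩

end InnerProductSpace

lemma mul_le_half_of_le_div_two_mul {a b θ : ℝ} (hθ : 0 ≤ θ) (hb : 0 ≤ b)
    (h : a ≤ θ / (2 * b)) : a * b ≤ θ / 2 := by
  rcases hb.eq_or_lt with rfl | hb
  · rw [mul_zero]; positivity
  · rwa [le_div_iff₀ (by positivity), mul_left_comm, ← le_div_iff₀' two_pos] at h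

end

/-- Stability of the inf-sup condition of `M_ν = I - νC` on a closed subspace `Z`
under perturbation of the spectral parameter: if the inf-sup constant of
`M_{λ₀}` on `Z` is at least `θ` (in both arguments), then for `|ν - λ₀| ≤ θ/(2‖C‖)`
the inf-sup constant of `M_ν` on `Z` is at least `θ/2`, and `P_Z M_ν |_Z` is
boundedly invertible on `Z`. -/
theorem infSup_perturbation_of_spectral_parameter
    {H : Type*} [NormedAddCommGroup H] [InnerProductSpace ℂ H] [CompleteSpace H]
    (C : H →L[ℂ] H) (lam₀ : ℂ) (θ : ℝ) (hθ : 0 < θ)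
    (Z : Submodule ℂ H) (hZ : IsClosed (Z : Set H)) [Z.HasOrthogonalProjection]
    (hinf : ∀ w : Z, θ * ‖(w : H)‖ ≤
      ⨆ v : Z, ‖(inner ℂ ((ContinuousLinearMap.id ℂ H - lam₀ • C) (w : H)) ((v : Z) : H) : ℂ)‖
        / ‖((v : Z) : H)‖)
    (hinf' : ∀ v : Z, θ * ‖(v : H)‖ ≤
      ⨆ w : Z, ‖(inner ℂ ((ContinuousLinearMap.id ℂ H - lam₀ • C) ((w : Z) : H)) (v : H) : ℂ)‖
        / ‖((w : Z) : H)‖) :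
    ∀ ν : ℂ, ‖ν - lam₀‖ ≤ θ / (2 * ‖C‖) →
      (∀ w : Z, (θ / 2) * ‖(w : H)‖ ≤
        ⨆ v : Z, ‖(inner ℂ ((ContinuousLinearMap.id ℂ H - ν • C) (w : H)) ((v : Z) : H) : ℂ)‖
          / ‖((v : Z) : H)‖) ∧
      ∃ N : Z →L[ℂ] Z,
        N.comp (Z.orthogonalProjectionOnto.comp
          ((ContinuousLinearMap.id ℂ H - ν • C).comp Z.subtypeL)) = ContinuousLinearMap.id ℂ Z ∧
        (Z.orthogonalProjectionOnto.comp
          ((ContinuousLinearMap.id ℂ H - ν • C).comp Z.subtypeL)).comp N =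
            ContinuousLinearMap.id ℂ Z := by
  intro ν hν
  have : CompleteSpace Z := hZ.completeSpace_coe
  set T : ℂ → Z →L[ℂ] Z := fun μ => Z.compression (ContinuousLinearMap.id ℂ H - μ • C)
  have hT₀ : ∀ w : Z, θ * ‖w‖ ≤ ‖T lam₀ w‖ := fun w => by
    have := hinf w
    rwa [Submodule.iSup_norm_inner_div_norm_eq_norm_orthogonalProjectionOnto] at this
  have hT₀' : ∀ v : Z, θ * ‖v‖ ≤ ‖(T lam₀).adjoint v‖ := fun v => by
    have := hinf' v
    rwa [Submodule.iSup_norm_inner_div_norm_eq_norm_adjoint_compression] at this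
  have hdist : ‖T ν - T lam₀‖ ≤ θ / 2 :=
    calc ‖T ν - T lam₀‖ ≤ ‖(lam₀ - ν) • C‖ := by
          rw [← Submodule.compression_sub, sub_sub_sub_cancel_left, ← sub_smul]
          exact Z.norm_compression_le _
      _ = ‖ν - lam₀‖ * ‖C‖ := by rw [norm_smul, norm_sub_rev]
      _ ≤ θ / 2 := mul_le_half_of_le_div_two_mul hθ.le (norm_nonneg C) hν
  have hdist' : ‖(T ν).adjoint - (T lam₀).adjoint‖ ≤ θ / 2 := by
    rwa [← map_sub, LinearIsometryEquiv.norm_map]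
  have hTν : ∀ w : Z, θ / 2 * ‖w‖ ≤ ‖T ν w‖ := by
    simpa only [sub_half] using ContinuousLinearMap.le_norm_map_of_norm_sub_le hT₀ hdist
  have hTν' : ∀ v : Z, θ / 2 * ‖v‖ ≤ ‖(T ν).adjoint v‖ := by
    simpa only [sub_half] using ContinuousLinearMap.le_norm_map_of_norm_sub_le hT₀' hdist'
  refine ⟨fun w => ?_, ?_⟩
  · rw [Submodule.iSup_norm_inner_div_norm_eq_norm_orthogonalProjectionOnto]
    exact hTν w
  · obtain ⟨u, hu⟩ := (T ν).isUnit_of_le_norm_map_of_le_norm_adjoint_map (half_pos hθ) hTν hTν'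
    exact ⟨↑u⁻¹, (hu ▸ u.inv_mul : ↑u⁻¹ * T ν = 1), (hu ▸ u.mul_inv : T ν * ↑u⁻¹ = 1)⟩
end

section
/- Let H be a Hilbert space, C : H → H bounded, u, ū ∈ H with ‖u − ū‖ ≤ ε‖ū‖ and C ū ≠ 0. For z ∈ span{C u}^⊥, let z₀ = P_{span{C ū}^⊥}(z) be its orthogonal projection onto span{C ū}^⊥. Then ‖z − z₀‖ ≤ (‖ū‖‖C‖/‖C ū‖) · ε · ‖z‖. -/
/-!
`z - z₀` is the projection of `z` onto the line through `C ū`, of length `|⟪C ū, z⟫| / ‖C ū‖`.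
Since `z ⊥ C u`, `⟪C ū, z⟫ = ⟪C ū - C u, z⟫`, which is at most `‖C‖ ε ‖ū‖ ‖z‖` in absolute value.
-/

open RealInnerProductSpace

section

variable {𝕜 E : Type*} [RCLike 𝕜] [NormedAddCommGroup E] [InnerProductSpace 𝕜 E]

open scoped InnerProductSpace

theorem Submodule.norm_starProjection_singleton (v w : E) :
    ‖(𝕜 ∙ v).starProjection w‖ = ‖⟪v, w⟫_𝕜‖ / ‖v‖ := by
  rcases eq_or_ne v 0 with rfl | hv
  · simp
  rw [starProjection_singleton, norm_smul, norm_div, RCLike.norm_ofReal,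
    abs_of_nonneg (sq_nonneg _)]
  field_simp [norm_ne_zero_iff.mpr hv]

theorem Submodule.norm_sub_starProjection_orthogonal_singleton (v w : E) :
    ‖w - (𝕜 ∙ v)ᗮ.starProjection w‖ = ‖⟪v, w⟫_𝕜‖ / ‖v‖ := by
  rw [starProjection_orthogonal, sub_apply, ContinuousLinearMap.id_apply,
    sub_sub_cancel, norm_starProjection_singleton]

theorem norm_inner_le_norm_sub_mul_of_mem_orthogonal_singleton {w z : E}
    (hz : z ∈ (𝕜 ∙ w)ᗮ) (v : E) : ‖⟪v, z⟫_𝕜‖ ≤ ‖v - w‖ * ‖z‖ := by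
  have hwz : ⟪w, z⟫_𝕜 = 0 := Submodule.mem_orthogonal_singleton_iff_inner_right.mp hz
  calc ‖⟪v, z⟫_𝕜‖ = ‖⟪v - w, z⟫_𝕜‖ := by rw [inner_sub_left, hwz, sub_zero]
    _ ≤ ‖v - w‖ * ‖z‖ := norm_inner_le_norm _ _

end

theorem perturbed_orthogonal_complement_bound_general
    {H : Type*} [NormedAddCommGroup H] [InnerProductSpace ℝ H]
    (C : H →L[ℝ] H) (u ub : H) (ε : ℝ)
    (hclose : ‖u - ub‖ ≤ ε * ‖ub‖)
    (z : H) (hz : z ∈ (ℝ ∙ (C u))ᗮ) :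
    ‖z - (Submodule.orthogonalProjection (ℝ ∙ (C ub))ᗮ z : H)‖ ≤ (‖ub‖ * ‖C‖ / ‖C ub‖) * ε * ‖z‖ := by
  calc _ = ‖⟪C ub, z⟫‖ / ‖C ub‖ := Submodule.norm_sub_starProjection_orthogonal_singleton _ _
    _ ≤ ‖C ub - C u‖ * ‖z‖ / ‖C ub‖ := by
      gcongr; exact norm_inner_le_norm_sub_mul_of_mem_orthogonal_singleton hz _
    _ ≤ ‖C‖ * ‖u - ub‖ * ‖z‖ / ‖C ub‖ := by
      rw [norm_sub_rev, ← map_sub]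
      gcongr; exact C.le_opNorm _
    _ ≤ ‖C‖ * (ε * ‖ub‖) * ‖z‖ / ‖C ub‖ := by gcongr
    _ = (‖ub‖ * ‖C‖ / ‖C ub‖) * ε * ‖z‖ := by ring

/-- Inequality (zw2): for `z ⊥ Cu` with `‖u - ū‖ ≤ ε‖ū‖`, the orthogonal
projection `z₀` of `z` onto `span{Cū}ᗮ` satisfies
`‖z - z₀‖ ≤ (‖ū‖‖C‖/‖Cū‖) ε ‖z‖`. -/
theorem perturbed_orthogonal_complement_bound
    {H : Type*} [NormedAddCommGroup H] [InnerProductSpace ℝ H] [CompleteSpace H]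
    (C : H →L[ℝ] H) (u ub : H) (ε : ℝ)
    (hclose : ‖u - ub‖ ≤ ε * ‖ub‖) (hCub : C ub ≠ 0)
    (z : H) (hz : z ∈ (ℝ ∙ (C u))ᗮ) :
    ‖z - (Submodule.orthogonalProjection (ℝ ∙ (C ub))ᗮ z : H)‖ ≤ (‖ub‖ * ‖C‖ / ‖C ub‖) * ε * ‖z‖ :=
  perturbed_orthogonal_complement_bound_general C u ub ε hclose z hz
end

section
/- Let H be a Hilbert space and define R : H × ℝ → H × ℝ by R(u,ν) = (u − νCu, 1 − ‖Cu‖²/2) for a bounded linear operator C on H. Then the Fréchet derivative DR of R is Lipschitz continuous: ‖DR(u₁,ν₁) − DR(u₂,ν₂)‖ ≤ √2 ‖C‖ ‖(u₁,ν₁) − (u₂,ν₂)‖, where the product space carries the norm ‖(u,ν)‖ = (‖u‖² + ν²)^{1/2}. -/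
open scoped RealInnerProductSpace

noncomputable section

variable {H : Type*} [NormedAddCommGroup H] [InnerProductSpace ℝ H] [CompleteSpace H]

/-- The Fréchet derivative `DR(ū,ν̄)(u,ν) = (u - ν̄Cu - νCū, -⟨Cū, u⟩)` of the map
`R(u,ν) = (u - νCu, 1 - ‖Cu‖²/2)`, as a bounded operator on `H × ℝ`. -/
def newtonDR (C : H →L[ℝ] H) (ub : H) (nb : ℝ) : (H × ℝ) →L[ℝ] (H × ℝ) :=
  (ContinuousLinearMap.fst ℝ H ℝ - nb • (C.comp (ContinuousLinearMap.fst ℝ H ℝ))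
      - (ContinuousLinearMap.snd ℝ H ℝ).smulRight (C ub)).prod
    (-((innerSL ℝ (C ub)).comp (ContinuousLinearMap.fst ℝ H ℝ)))

/-- The same derivative viewed as an operator on `H × ℝ` equipped with the
Hilbertian (ℓ²) product norm `‖(u,ν)‖ = (‖u‖² + ν²)^{1/2}`. -/
def newtonDRL2 (C : H →L[ℝ] H) (ub : H) (nb : ℝ) :
    WithLp 2 (H × ℝ) →L[ℝ] WithLp 2 (H × ℝ) :=
  (((WithLp.prodContinuousLinearEquiv 2 ℝ H ℝ).symm : (H × ℝ) →L[ℝ] WithLp 2 (H × ℝ)).comp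
      (newtonDR C ub nb)).comp
    ((WithLp.prodContinuousLinearEquiv 2 ℝ H ℝ : WithLp 2 (H × ℝ) →L[ℝ] (H × ℝ)))

set_option maxHeartbeats 1000000 in
/-- Lemma `lem:Lip`: the derivative `DR` of `R(u,ν) = (u - νCu, 1 - ‖Cu‖²/2)` is
Lipschitz continuous with constant `√2 ‖C‖` for the ℓ² product norm. -/
theorem newtonDR_lipschitz (C : H →L[ℝ] H) (u₁ u₂ : H) (ν₁ ν₂ : ℝ) :
    ‖newtonDRL2 C u₁ ν₁ - newtonDRL2 C u₂ ν₂‖ ≤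
      Real.sqrt 2 * ‖C‖ *
        ‖((WithLp.prodContinuousLinearEquiv 2 ℝ H ℝ).symm (u₁ - u₂, ν₁ - ν₂))‖ := by
  have hK : (0:ℝ) ≤ ‖C‖ := norm_nonneg _
  set M := ‖((WithLp.prodContinuousLinearEquiv 2 ℝ H ℝ).symm (u₁ - u₂, ν₁ - ν₂))‖ with hM
  have hMsq : M ^ 2 = ‖u₁ - u₂‖ ^ 2 + (ν₁ - ν₂) ^ 2 := by
    rw [hM, WithLp.prod_norm_sq_eq_of_L2]
    simp [sq_abs, Real.norm_eq_abs]
  apply ContinuousLinearMap.opNorm_le_bound _ (by positivity)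
  intro x
  have hfst : ((newtonDRL2 C u₁ ν₁ - newtonDRL2 C u₂ ν₂) x).fst
      = -((ν₁ - ν₂) • C x.fst) - x.snd • C (u₁ - u₂) := by
    simp [newtonDRL2, newtonDR, sub_smul, map_sub]
    module
  have hsnd : ((newtonDRL2 C u₁ ν₁ - newtonDRL2 C u₂ ν₂) x).snd
      = -⟪C (u₁ - u₂), x.fst⟫ := by
    simp [newtonDRL2, newtonDR, map_sub, inner_sub_left]
    ring
  set a := ‖u₁ - u₂‖ with ha
  set b := |ν₁ - ν₂| with hb
  set p := ‖x.fst‖ with hp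
  set q := |x.snd| with hq
  set F := ‖((newtonDRL2 C u₁ ν₁ - newtonDRL2 C u₂ ν₂) x).fst‖ with hF
  set S := ‖((newtonDRL2 C u₁ ν₁ - newtonDRL2 C u₂ ν₂) x).snd‖ with hS
  have ha0 : 0 ≤ a := norm_nonneg _
  have hb0 : 0 ≤ b := abs_nonneg _
  have hp0 : 0 ≤ p := norm_nonneg _
  have hq0 : 0 ≤ q := abs_nonneg _
  have hf : F ≤ ‖C‖ * (b * p + q * a) := by
    rw [hF, hfst]
    calc ‖-((ν₁ - ν₂) • C x.fst) - x.snd • C (u₁ - u₂)‖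
        ≤ ‖-((ν₁ - ν₂) • C x.fst)‖ + ‖x.snd • C (u₁ - u₂)‖ := norm_sub_le _ _
      _ ≤ b * (‖C‖ * p) + q * (‖C‖ * a) := by
          rw [norm_neg, norm_smul, norm_smul]
          gcongr <;> first | exact C.le_opNorm _ | exact le_rfl
      _ = ‖C‖ * (b * p + q * a) := by ring
  have hs : S ≤ ‖C‖ * (a * p) := by
    rw [hS, hsnd, norm_neg]
    calc ‖⟪C (u₁ - u₂), x.fst⟫‖ ≤ ‖C (u₁ - u₂)‖ * ‖x.fst‖ := norm_inner_le_norm _ _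
      _ ≤ (‖C‖ * a) * p := by gcongr; exact C.le_opNorm _
      _ = ‖C‖ * (a * p) := by ring
  have hxsq : ‖x‖ ^ 2 = p ^ 2 + q ^ 2 := by
    rw [WithLp.prod_norm_sq_eq_of_L2]; simp [hp, hq, sq_abs, Real.norm_eq_abs]
  have hF0 : 0 ≤ F := norm_nonneg _
  have hS0 : 0 ≤ S := norm_nonneg _
  have key : ‖(newtonDRL2 C u₁ ν₁ - newtonDRL2 C u₂ ν₂) x‖ ^ 2
      ≤ (Real.sqrt 2 * ‖C‖ * M * ‖x‖) ^ 2 := by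
    rw [WithLp.prod_norm_sq_eq_of_L2, ← hF, ← hS]
    have h2 : (Real.sqrt 2) ^ 2 = 2 := Real.sq_sqrt (by norm_num)
    have hMsq' : M ^ 2 = a ^ 2 + b ^ 2 := by rw [hMsq, ← sq_abs (ν₁ - ν₂)]
    have hexp : (Real.sqrt 2 * ‖C‖ * M * ‖x‖) ^ 2
        = 2 * ‖C‖ ^ 2 * (a ^ 2 + b ^ 2) * (p ^ 2 + q ^ 2) := by
      rw [mul_pow, mul_pow, mul_pow, h2, hMsq', hxsq]
    rw [hexp]
    have hF2 : F ^ 2 ≤ ‖C‖ ^ 2 * (b * p + q * a) ^ 2 := by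
      rw [← mul_pow]; exact pow_le_pow_left₀ hF0 hf 2
    have hS2 : S ^ 2 ≤ ‖C‖ ^ 2 * (a * p) ^ 2 := by
      rw [← mul_pow]; exact pow_le_pow_left₀ hS0 hs 2
    have hpure : (b * p + q * a) ^ 2 + (a * p) ^ 2
        ≤ 2 * (a ^ 2 + b ^ 2) * (p ^ 2 + q ^ 2) := by
      nlinarith [sq_nonneg (b * p - a * q), sq_nonneg (a * q), sq_nonneg (b * q)]
    calc F ^ 2 + S ^ 2
        ≤ ‖C‖ ^ 2 * (b * p + q * a) ^ 2 + ‖C‖ ^ 2 * (a * p) ^ 2 := add_le_add hF2 hS2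
      _ = ‖C‖ ^ 2 * ((b * p + q * a) ^ 2 + (a * p) ^ 2) := by ring
      _ ≤ ‖C‖ ^ 2 * (2 * (a ^ 2 + b ^ 2) * (p ^ 2 + q ^ 2)) :=
          mul_le_mul_of_nonneg_left hpure (sq_nonneg _)
      _ = 2 * ‖C‖ ^ 2 * (a ^ 2 + b ^ 2) * (p ^ 2 + q ^ 2) := by ring
  have hrhs0 : 0 ≤ Real.sqrt 2 * ‖C‖ * M * ‖x‖ := by positivity
  exact (pow_le_pow_iff_left₀ (norm_nonneg _) hrhs0 two_ne_zero).mp key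

end
end

section
/- Let H be a complex Hilbert space, C compact on H with simple dominant positive eigenvalue μ₁ and normalized eigenvector u₁, and suppose a₀ ∈ H has ‖a₀‖ = 1 and E_C(μ₁)a₀ = α u₁ with α > 0. Suppose further ‖(μ₁⁻¹C)^n E_C(σ(C)∖{μ₁})a₀‖ ≤ c₁⁻¹ δ̄^{n−ℓ₀} for constants c₁ > 0, ℓ₀ ∈ ℕ, 0 < δ̄ < 1, and let ‖·‖ be equivalent to the decomposition norm with constants c₁ ≤ · ≤ C₁. Then the normalized power iterates a_n = C^n a₀ / ‖C^n a₀‖ satisfy α·dist(span{a_n}, span{u₁}) ≤ ‖(μ₁⁻¹C)^n a₀ − α u₁‖ ≤ (C₁/c₁) δ̄^{n−ℓ₀}, and the Rayleigh quotients ρ_{n+1} = ⟨C a_n, a_n⟩ satisfy |ρ_{n+1} − μ₁| ≤ α⁻¹(μ₁ + ‖C‖)(C₁/c₁) δ̄^{n−ℓ₀}. -/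
/-!
Splitting `a₀ = α u₁ + P₂ a₀` and using `(μ₁⁻¹C) u₁ = u₁` gives
`(μ₁⁻¹C)ⁿ a₀ - α u₁ = (μ₁⁻¹C)ⁿ P₂ a₀`, so the contraction hypothesis bounds the error; the
factor `C₁ / c₁` is admissible because `C₁ ≥ 1`, which follows by letting `n → ∞` in
`‖(μ₁⁻¹C)ⁿ a₀‖ ≤ C₁ (α + ‖(μ₁⁻¹C)ⁿ P₂ a₀‖)`. The iterate `a n` is a real multiple of
`(μ₁⁻¹C)ⁿ a₀`, which gives the distance bound. Since `C - μ₁` annihilates `u₁`, the Rayleigh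
quotient error is at most `(μ₁ + ‖C‖)` times the sine of the angle between `a n` and `u₁`; this
sine is symmetric in the two unit vectors, hence at most `‖c • a n - u₁‖` for every scalar `c`.
-/

open Filter Topology

section UnitVector

variable {𝕜 E : Type*} [RCLike 𝕜] [NormedAddCommGroup E] [InnerProductSpace 𝕜 E]
  {u : E}

local notation "⟪" x ", " y "⟫" => inner 𝕜 x y

theorem norm_sub_smul_sq_of_norm_eq_one (hu : ‖u‖ = 1) (x : E) (c : 𝕜) :
    ‖x - c • u‖ ^ 2 = ‖x - ⟪u, x⟫ • u‖ ^ 2 + ‖⟪u, x⟫ - c‖ ^ 2 := by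
  have horth : ⟪x - ⟪u, x⟫ • u, (⟪u, x⟫ - c) • u⟫ = 0 := by
    simp [inner_sub_left, inner_smul_left, inner_smul_right, inner_self_eq_norm_sq_to_K, hu]
  have hsplit : x - c • u = (x - ⟪u, x⟫ • u) + (⟪u, x⟫ - c) • u := by
    rw [sub_smul]; abel
  simp only [sq]
  rw [hsplit, norm_add_sq_eq_norm_sq_add_norm_sq_of_inner_eq_zero _ _ horth, norm_smul, hu,
    mul_one]

theorem norm_sub_inner_smul_le (hu : ‖u‖ = 1) (x : E) (c : 𝕜) :
    ‖x - ⟪u, x⟫ • u‖ ≤ ‖x - c • u‖ := by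
  refine le_of_sq_le_sq ?_ (norm_nonneg _)
  rw [norm_sub_smul_sq_of_norm_eq_one hu x c]
  exact le_add_of_nonneg_right (sq_nonneg _)

theorem norm_sub_inner_smul_comm {a : E} (ha : ‖a‖ = 1) (hu : ‖u‖ = 1) :
    ‖a - ⟪u, a⟫ • u‖ = ‖u - ⟪a, u⟫ • a‖ := by
  have h₁ := norm_sub_smul_sq_of_norm_eq_one hu a (0 : 𝕜)
  have h₂ := norm_sub_smul_sq_of_norm_eq_one ha u (0 : 𝕜)
  simp only [zero_smul, sub_zero, ha, hu, norm_inner_symm a u] at h₁ h₂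
  exact (sq_eq_sq₀ (norm_nonneg _) (norm_nonneg _)).1 (by linarith)

theorem norm_inner_apply_self_sub_le {C : E →L[𝕜] E} {μ : ℝ} (hu : ‖u‖ = 1)
    (heig : C u = (μ : 𝕜) • u) {a : E} (ha : a = 0 ∨ ‖a‖ = 1) (c : 𝕜) :
    ‖⟪C a, a⟫ - (μ : 𝕜)‖ ≤ (|μ| + ‖C‖) * ‖c • a - u‖ := by
  rcases ha with rfl | ha
  · simp [hu]
  set v := a - ⟪u, a⟫ • u
  have hres : C a - (μ : 𝕜) • a = C v - (μ : 𝕜) • v := by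
    simp only [v, map_sub, map_smul, heig, smul_sub, smul_smul, mul_comm]
    abel
  calc ‖⟪C a, a⟫ - (μ : 𝕜)‖ = ‖⟪C v - (μ : 𝕜) • v, a⟫‖ := by
        rw [← hres, inner_sub_left, inner_smul_left, inner_self_eq_norm_sq_to_K, ha]
        simp
    _ ≤ ‖C v - (μ : 𝕜) • v‖ := by
        simpa [ha] using norm_inner_le_norm (𝕜 := 𝕜) (C v - (μ : 𝕜) • v) a
    _ ≤ ‖C v‖ + ‖(μ : 𝕜) • v‖ := norm_sub_le _ _
    _ ≤ (|μ| + ‖C‖) * ‖v‖ := by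
        rw [norm_smul, RCLike.norm_ofReal, add_mul, add_comm (|μ| * _)]
        gcongr
        exact C.le_opNorm v
    _ = (|μ| + ‖C‖) * ‖u - ⟪a, u⟫ • a‖ := by rw [norm_sub_inner_smul_comm ha hu]
    _ ≤ (|μ| + ‖C‖) * ‖c • a - u‖ := by
        rw [norm_sub_rev (c • a)]
        gcongr
        exact norm_sub_inner_smul_le ha u c

end UnitVector

theorem tendsto_zpow_natCast_sub_atTop_nhds_zero {δ : ℝ} (h₀ : 0 < δ) (h₁ : δ < 1) (ℓ : ℕ) :
    Tendsto (fun m : ℕ => δ ^ ((m : ℤ) - ℓ)) atTop (𝓝 0) := by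
  simp_rw [zpow_sub₀ h₀.ne', zpow_natCast, div_eq_mul_inv]
  simpa using (tendsto_pow_atTop_nhds_zero_of_lt_one h₀.le h₁).mul_const (δ ^ ℓ)⁻¹

theorem one_le_of_tendsto_of_norm_add_le {ι E : Type*} {l : Filter ι} [l.NeBot]
    [NormedAddCommGroup E] {v : E} (hv : v ≠ 0) {f : ι → E} (hf : Tendsto f l (𝓝 0))
    {K : ℝ} (h : ∀ i, ‖v + f i‖ ≤ K * (‖v‖ + ‖f i‖)) : 1 ≤ K := by
  have hlim : ‖v‖ ≤ K * ‖v‖ := by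
    refine le_of_tendsto_of_tendsto' (b := l) ?_ ?_ h
    · simpa using (tendsto_const_nhds (x := v)).add hf |>.norm
    · simpa using (tendsto_const_nhds.add hf.norm).const_mul K
  exact (le_mul_iff_one_le_left (norm_pos_iff.2 hv)).1 hlim

section Decomposition

variable {𝕜 E : Type*} [NormedField 𝕜] [NormedAddCommGroup E] [NormedSpace 𝕜 E]
  {T P₁ P₂ : E →L[𝕜] E} {u x : E} {c : 𝕜}

theorem pow_apply_eq_smul_add_pow_apply (hsum : P₁ + P₂ = ContinuousLinearMap.id 𝕜 E)
    (hTu : T u = u) (hx : P₁ x = c • u) (n : ℕ) :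
    (T ^ n) x = c • u + (T ^ n) (P₂ x) := by
  have hTnu : (T ^ n) u = u := by
    rw [pow_apply_eq_iterate]
    exact Function.IsFixedPt.iterate hTu n
  conv_lhs => rw [← ContinuousLinearMap.id_apply (R₁ := 𝕜) x, ← hsum]
  rw [add_apply, map_add, hx, map_smul, hTnu]

theorem one_le_of_norm_le_decomposition (hsum : P₁ + P₂ = ContinuousLinearMap.id 𝕜 E)
    (hTu : T u = u) (hx : P₁ x = c • u) (hcu : c • u ≠ 0) (hP₂T : Commute P₂ T)
    (hdecay : Tendsto (fun n => (T ^ n) (P₂ x)) atTop (𝓝 0)) {K : ℝ}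
    (hK : ∀ y, ‖y‖ ≤ K * (‖P₁ y‖ + ‖P₂ y‖)) : 1 ≤ K := by
  refine one_le_of_tendsto_of_norm_add_le (l := atTop) hcu hdecay fun n => ?_
  have hP₂ : P₂ ((T ^ n) x) = (T ^ n) (P₂ x) :=
    DFunLike.congr_fun (hP₂T.pow_right n).eq x
  have hP₁ : P₁ ((T ^ n) x) = c • u := by
    have h : P₁ ((T ^ n) x) + P₂ ((T ^ n) x) = (T ^ n) x := by
      simpa only [add_apply, ContinuousLinearMap.id_apply] using
        DFunLike.congr_fun hsum ((T ^ n) x)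
    rw [eq_sub_of_add_eq h, hP₂, pow_apply_eq_smul_add_pow_apply hsum hTu hx n,
      add_sub_cancel_right]
  have h := hK ((T ^ n) x)
  rwa [hP₁, hP₂, pow_apply_eq_smul_add_pow_apply hsum hTu hx n] at h

end Decomposition

section NormalizedIteration

variable {E : Type*} [NormedAddCommGroup E] [NormedSpace ℂ E] {C : E →L[ℂ] E} {a : ℕ → E}

theorem normalized_iterate_eq_zero_or_norm_eq_one (ha : ‖a 0‖ = 1)
    (harec : ∀ n, a (n + 1) = (‖C (a n)‖⁻¹ : ℝ) • C (a n)) (n : ℕ) : a n = 0 ∨ ‖a n‖ = 1 := by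
  rcases n with _ | n
  · exact Or.inr ha
  rw [harec n]
  rcases eq_or_ne (C (a n)) 0 with h | h
  · simp [h]
  · exact Or.inr (norm_smul_inv_norm h)

theorem exists_smul_pow_apply_eq_smul_normalized_iterate
    (harec : ∀ n, a (n + 1) = (‖C (a n)‖⁻¹ : ℝ) • C (a n)) (r : ℝ) (n : ℕ) :
    ∃ t : ℝ, (((r : ℂ) • C) ^ n) (a 0) = (t : ℂ) • a n := by
  induction n with
  | zero => exact ⟨1, by simp⟩
  | succ n ih =>
    obtain ⟨t, ht⟩ := ih
    have hrescale : C (a n) = (‖C (a n)‖ : ℂ) • a (n + 1) := by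
      rcases eq_or_ne (C (a n)) 0 with h | h
      · simp [h]
      · rw [harec n, Complex.coe_smul, smul_smul, mul_inv_cancel₀ (norm_ne_zero_iff.2 h),
          one_smul]
    refine ⟨t * r * ‖C (a n)‖, ?_⟩
    rw [pow_succ', mul_apply_eq_comp, ht, map_smul, smul_apply]
    conv_lhs => rw [hrescale, smul_smul, smul_smul]
    push_cast
    congr 1

end NormalizedIteration

theorem norm_sub_smul_eq_mul_norm_smul_sub {E : Type*} [NormedAddCommGroup E] [NormedSpace ℂ E]
    {x y : E} (u : E) {α t : ℝ} (hα : 0 < α) (hx : x = (t : ℂ) • y) :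
    ‖x - (α : ℂ) • u‖ = α * ‖((α⁻¹ * t : ℝ) : ℂ) • y - u‖ := by
  have h : x - (α : ℂ) • u = (α : ℂ) • (((α⁻¹ * t : ℝ) : ℂ) • y - u) := by
    rw [hx, smul_sub, smul_smul, Complex.ofReal_mul, ← mul_assoc, Complex.ofReal_inv,
      mul_inv_cancel₀ (Complex.ofReal_ne_zero.2 hα.ne'), one_mul]
  rw [h, norm_smul, Complex.norm_real, Real.norm_of_nonneg hα.le]

-- `P₁` and `P₂` stand for the Riesz projections `E_C(μ₁)` and `E_C(σ(C) ∖ {μ₁})`.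
theorem power_iteration_linear_convergence_general
    {H : Type*} [NormedAddCommGroup H] [InnerProductSpace ℂ H]
    (C : H →L[ℂ] H)
    (μ₁ : ℝ) (hμ₁ : 0 < μ₁) (u₁ : H) (hu₁ : ‖u₁‖ = 1) (heig : C u₁ = (μ₁ : ℂ) • u₁)
    (P₁ P₂ : H →L[ℂ] H)
    (hsum : P₁ + P₂ = ContinuousLinearMap.id ℂ H)
    (hP₂C : P₂.comp C = C.comp P₂)
    (a₀ : H) (ha₀ : ‖a₀‖ = 1) (α : ℝ) (hα : 0 < α) (hP₁a₀ : P₁ a₀ = (α : ℂ) • u₁)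
    (c₁ C₁ : ℝ)
    (hequiv : ∀ u : H, c₁ * (‖P₁ u‖ + ‖P₂ u‖) ≤ ‖u‖ ∧ ‖u‖ ≤ C₁ * (‖P₁ u‖ + ‖P₂ u‖))
    (δb : ℝ) (hδb0 : 0 < δb) (hδb1 : δb < 1) (ℓ₀ : ℕ)
    (hcontr : ∀ n : ℕ,
      ‖((((μ₁ : ℂ)⁻¹ • C) ^ n) (P₂ a₀))‖ ≤ c₁⁻¹ * δb ^ ((n : ℤ) - (ℓ₀ : ℤ)))
    -- normalized power iterates
    (a : ℕ → H) (ha0 : a 0 = a₀)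
    (harec : ∀ n : ℕ, a (n + 1) = (‖C (a n)‖⁻¹ : ℝ) • C (a n)) :
    ∀ n : ℕ,
      α * (⨅ c : ℝ, ‖(c : ℂ) • a n - u₁‖) ≤
        ‖((((μ₁ : ℂ)⁻¹ • C) ^ n) a₀) - (α : ℂ) • u₁‖ ∧
      ‖((((μ₁ : ℂ)⁻¹ • C) ^ n) a₀) - (α : ℂ) • u₁‖ ≤
        (C₁ / c₁) * δb ^ ((n : ℤ) - (ℓ₀ : ℤ)) ∧
      ‖(inner ℂ (C (a n)) (a n) : ℂ) - (μ₁ : ℂ)‖ ≤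
        α⁻¹ * (μ₁ + ‖C‖) * (C₁ / c₁) * δb ^ ((n : ℤ) - (ℓ₀ : ℤ)) := by
  subst ha0
  intro n
  set T : H →L[ℂ] H := (μ₁ : ℂ)⁻¹ • C
  have hTu : T u₁ = u₁ := by
    rw [smul_apply, heig, smul_smul, inv_mul_cancel₀ (Complex.ofReal_ne_zero.2 hμ₁.ne'),
      one_smul]
  have hC₁ : 1 ≤ C₁ :=
    one_le_of_norm_le_decomposition hsum hTu hP₁a₀
      (smul_ne_zero (Complex.ofReal_ne_zero.2 hα.ne') (norm_ne_zero_iff.1 (by simp [hu₁])))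
      ((show Commute P₂ C from hP₂C).smul_right _)
      (squeeze_zero_norm hcontr
        (by simpa using (tendsto_zpow_natCast_sub_atTop_nhds_zero hδb0 hδb1 ℓ₀).const_mul c₁⁻¹))
      fun y => (hequiv y).2
  have hdist : ‖(T ^ n) (a 0) - (α : ℂ) • u₁‖ ≤ C₁ / c₁ * δb ^ ((n : ℤ) - ℓ₀) := by
    rw [pow_apply_eq_smul_add_pow_apply hsum hTu hP₁a₀, add_sub_cancel_left, div_eq_mul_inv,
      mul_assoc]
    exact (hcontr n).trans (le_mul_of_one_le_left ((norm_nonneg _).trans (hcontr n)) hC₁)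
  obtain ⟨t, hTn⟩ := exists_smul_pow_apply_eq_smul_normalized_iterate harec μ₁⁻¹ n
  rw [Complex.ofReal_inv] at hTn
  obtain ⟨s, hscale⟩ : ∃ s : ℝ,
      ‖(T ^ n) (a 0) - (α : ℂ) • u₁‖ = α * ‖(s : ℂ) • a n - u₁‖ :=
    ⟨_, norm_sub_smul_eq_mul_norm_smul_sub u₁ hα hTn⟩
  refine ⟨?_, hdist, ?_⟩
  · rw [hscale]
    gcongr
    exact ciInf_le ⟨0, by rintro _ ⟨c, rfl⟩; exact norm_nonneg _⟩ s
  · calc ‖(inner ℂ (C (a n)) (a n) : ℂ) - (μ₁ : ℂ)‖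
        ≤ (|μ₁| + ‖C‖) * ‖(s : ℂ) • a n - u₁‖ :=
          norm_inner_apply_self_sub_le hu₁ heig
            (normalized_iterate_eq_zero_or_norm_eq_one ha₀ harec n) _
      _ = α⁻¹ * (μ₁ + ‖C‖) * ‖(T ^ n) (a 0) - (α : ℂ) • u₁‖ := by
          rw [hscale, abs_of_pos hμ₁]
          field_simp
      _ ≤ α⁻¹ * (μ₁ + ‖C‖) * (C₁ / c₁) * δb ^ ((n : ℤ) - ℓ₀) := by
          rw [mul_assoc _ (C₁ / c₁)]
          gcongr

/-- Lemma `lem:contract`: linear convergence of the power iteration for a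
(not necessarily normal) compact operator `C` with simple dominant positive
eigenvalue `μ₁` and eigenvector `u₁`. `P₁` and `P₂` denote the Riesz projections
onto the principal eigenspace and its spectral complement (`P₁ + P₂ = I`), with
the decomposition norm `‖P₁·‖ + ‖P₂·‖` equivalent to `‖·‖` with constants
`c₁, C₁`, and the off-eigenspace contraction `‖(μ₁⁻¹C)^n P₂ a₀‖ ≤ c₁⁻¹ δ̄^{n-ℓ₀}`. -/
theorem power_iteration_linear_convergence
    {H : Type*} [NormedAddCommGroup H] [InnerProductSpace ℂ H] [CompleteSpace H]
    (C : H →L[ℂ] H) (hC : IsCompactOperator ⇑C)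
    (μ₁ : ℝ) (hμ₁ : 0 < μ₁) (u₁ : H) (hu₁ : ‖u₁‖ = 1) (heig : C u₁ = (μ₁ : ℂ) • u₁)
    (P₁ P₂ : H →L[ℂ] H)
    (hsum : P₁ + P₂ = ContinuousLinearMap.id ℂ H)
    (hP₁C : P₁.comp C = C.comp P₁) (hP₂C : P₂.comp C = C.comp P₂)
    (a₀ : H) (ha₀ : ‖a₀‖ = 1) (α : ℝ) (hα : 0 < α) (hP₁a₀ : P₁ a₀ = (α : ℂ) • u₁)
    (c₁ C₁ : ℝ) (hc₁ : 0 < c₁) (hC₁ : 0 < C₁)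
    (hequiv : ∀ u : H, c₁ * (‖P₁ u‖ + ‖P₂ u‖) ≤ ‖u‖ ∧ ‖u‖ ≤ C₁ * (‖P₁ u‖ + ‖P₂ u‖))
    (δb : ℝ) (hδb0 : 0 < δb) (hδb1 : δb < 1) (ℓ₀ : ℕ)
    (hcontr : ∀ n : ℕ,
      ‖((((μ₁ : ℂ)⁻¹ • C) ^ n) (P₂ a₀))‖ ≤ c₁⁻¹ * δb ^ ((n : ℤ) - (ℓ₀ : ℤ)))
    -- normalized power iterates
    (a : ℕ → H) (ha0 : a 0 = a₀)
    (harec : ∀ n : ℕ, a (n + 1) = (‖C (a n)‖⁻¹ : ℝ) • C (a n)) :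
    ∀ n : ℕ,
      α * (⨅ c : ℝ, ‖(c : ℂ) • a n - u₁‖) ≤
        ‖((((μ₁ : ℂ)⁻¹ • C) ^ n) a₀) - (α : ℂ) • u₁‖ ∧
      ‖((((μ₁ : ℂ)⁻¹ • C) ^ n) a₀) - (α : ℂ) • u₁‖ ≤
        (C₁ / c₁) * δb ^ ((n : ℤ) - (ℓ₀ : ℤ)) ∧
      ‖(inner ℂ (C (a n)) (a n) : ℂ) - (μ₁ : ℂ)‖ ≤
        α⁻¹ * (μ₁ + ‖C‖) * (C₁ / c₁) * δb ^ ((n : ℤ) - (ℓ₀ : ℤ)) :=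
  power_iteration_linear_convergence_general C μ₁ hμ₁ u₁ hu₁ heig P₁ P₂ hsum hP₂C a₀ ha₀ α hα hP₁a₀
    c₁ C₁ hequiv δb hδb0 hδb1 ℓ₀ hcontr a ha0 harec
end
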